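/- arXiv:2107.08164 — 2 statements merged into one kernel-verified Lean document; each statement's English description precedes it below -/
import Mathlib

section
/- (Collision detection with k senders.) Let n ≥ 1 and let S ⊆ Fin n with |S| = k (0 ≤ k ≤ n) be the set of qubits to which Pauli-X is applied, and let ψ = X_S ψ_W. Then every bitstring x with ψ(x) ≠ 0 has Hamming weight k−1 or k+1; the total Born-rule probability of outcomes of Hamming weight k−1 equals k/n, and the total probability of outcomes of Hamming weight k+1 equals (n−k)/n. In particular, if k = 0 every outcome has weight 1 with probability 1, and if k = n every outcome has weight n−1 with probability 1. -/
/-- Hamming weight of a bitstring. -/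
def hammingWt {n : ℕ} (x : Fin n → ZMod 2) : ℕ :=
  (Finset.univ.filter fun i => x i = 1).card

/-- The `n`-qubit W state: amplitude `1/√n` on each Hamming-weight-1 bitstring. -/
noncomputable def wState (n : ℕ) : EuclideanSpace ℂ (Fin n → ZMod 2) :=
  WithLp.toLp 2 fun x => if hammingWt x = 1 then ((1 / Real.sqrt n : ℝ) : ℂ) else 0

/-- Indicator bitstring of a set of qubits. -/
def chi {n : ℕ} (S : Finset (Fin n)) : Fin n → ZMod 2 :=
  fun i => if i ∈ S then 1 else 0

/-- Pauli-X flip on the qubits in `S`. -/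
noncomputable def pauliX {n : ℕ} (S : Finset (Fin n))
    (ψ : EuclideanSpace ℂ (Fin n → ZMod 2)) : EuclideanSpace ℂ (Fin n → ZMod 2) :=
  WithLp.toLp 2 fun x => ψ (x + chi S)

/-- Bitstring with a single 1 in position `i`. -/
def eVec {n : ℕ} (i : Fin n) : Fin n → ZMod 2 :=
  fun j => if j = i then 1 else 0


/-!
`X_S` only permutes the computational basis, so `X_S ψ_W` has amplitude `1/√n` on each of the
`n` strings `eᵢ + χ_S` and vanishes elsewhere. Flipping the qubits of `S` in `eᵢ` deletes the
single one when `i ∈ S` (weight `|S| - 1`) and adds `i` to `S` otherwise (weight `|S| + 1`), so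
the weight `|S| - 1` outcomes carry probability `|S|/n` and the weight `|S| + 1` outcomes
`(n - |S|)/n`.
-/

open Finset

variable {n : ℕ}

lemma add_chi_add_chi (S : Finset (Fin n)) (x : Fin n → ZMod 2) : x + chi S + chi S = x := by
  funext j
  simp only [Pi.add_apply, add_assoc, CharTwo.add_self_eq_zero, add_zero]

lemma eq_eVec_iff {y : Fin n → ZMod 2} {i : Fin n} : y = eVec i ↔ ∀ j, y j = 1 ↔ j = i := by
  refine ⟨fun h j => by simp [h, eVec], fun h => funext fun j => ?_⟩
  by_cases hj : j = i
  · simpa [eVec, hj] using (h j).2 hj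
  · have : ∀ a : ZMod 2, a ≠ 1 → a = 0 := by decide
    simpa [eVec, hj] using this _ (mt (h j).1 hj)

lemma eVec_injective : Function.Injective (eVec (n := n)) := fun i i' h =>
  (eq_eVec_iff.1 h i).1 (by simp [eVec])

lemma hammingWt_eq_one_iff {y : Fin n → ZMod 2} : hammingWt y = 1 ↔ ∃ i, y = eVec i := by
  simp only [hammingWt, card_eq_one, Finset.ext_iff, mem_filter, mem_univ, true_and,
    mem_singleton, eq_eVec_iff]

lemma filter_hammingWt_eq_one :
    univ.filter (fun y : Fin n → ZMod 2 => hammingWt y = 1) =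
      univ.map ⟨eVec, eVec_injective⟩ := by
  ext y
  simp [hammingWt_eq_one_iff, eq_comm]

lemma eVec_add_chi_apply_eq_one_iff {i j : Fin n} {S : Finset (Fin n)} :
    (eVec i + chi S) j = 1 ↔ (j = i ↔ j ∉ S) := by
  by_cases hj : j = i <;> by_cases hS : j ∈ S <;> simp [eVec, chi, hj, hS]

lemma hammingWt_eVec_add_chi_of_mem {i : Fin n} {S : Finset (Fin n)} (hi : i ∈ S) :
    hammingWt (eVec i + chi S) = #S - 1 := by
  rw [← card_erase_of_mem hi, hammingWt]
  congr 1
  ext j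
  simp only [mem_filter, mem_univ, true_and, mem_erase, eVec_add_chi_apply_eq_one_iff]
  by_cases hj : j = i <;> simp_all

lemma hammingWt_eVec_add_chi_of_notMem {i : Fin n} {S : Finset (Fin n)} (hi : i ∉ S) :
    hammingWt (eVec i + chi S) = #S + 1 := by
  rw [← card_insert_of_notMem hi, hammingWt]
  congr 1
  ext j
  simp only [mem_filter, mem_univ, true_and, mem_insert, eVec_add_chi_apply_eq_one_iff]
  by_cases hj : j = i <;> simp_all

lemma norm_sq_wState_apply (y : Fin n → ZMod 2) :
    ‖wState n y‖ ^ 2 = if hammingWt y = 1 then (1 / n : ℝ) else 0 := by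
  simp only [wState, PiLp.toLp_apply]
  split_ifs
  · rw [Complex.norm_real, norm_div, norm_one, Real.norm_of_nonneg (Real.sqrt_nonneg _), div_pow,
      one_pow, Real.sq_sqrt n.cast_nonneg]
  · simp

lemma exists_eq_eVec_add_chi_of_pauliX_wState_ne_zero {S : Finset (Fin n)}
    {x : Fin n → ZMod 2} (hx : pauliX S (wState n) x ≠ 0) : ∃ i, x = eVec i + chi S := by
  have hwt : hammingWt (x + chi S) = 1 := by
    by_contra h
    exact hx (by simp [pauliX, wState, h])
  obtain ⟨i, hi⟩ := hammingWt_eq_one_iff.1 hwt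
  exact ⟨i, by rw [← hi, add_chi_add_chi]⟩

lemma sum_filter_norm_sq_pauliX_wState (S : Finset (Fin n))
    (P : (Fin n → ZMod 2) → Prop) [DecidablePred P] :
    ∑ x ∈ univ.filter P, ‖pauliX S (wState n) x‖ ^ 2 = #{i | P (eVec i + chi S)} / n := by
  calc ∑ x ∈ univ.filter P, ‖pauliX S (wState n) x‖ ^ 2
      = ∑ y, if P (y + chi S) then ‖wState n y‖ ^ 2 else 0 := by
        rw [sum_filter]
        exact Fintype.sum_equiv (Equiv.addRight (chi S)) _ _ fun x => by
          simp [pauliX, add_chi_add_chi]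
    _ = ∑ y ∈ univ.filter (hammingWt · = 1), if P (y + chi S) then (1 / n : ℝ) else 0 := by
        rw [sum_filter]
        refine sum_congr rfl fun y _ => ?_
        rw [norm_sq_wState_apply]
        split_ifs <;> rfl
    _ = ∑ i, if P (eVec i + chi S) then (1 / n : ℝ) else 0 := by
        rw [filter_hammingWt_eq_one, sum_map]
        rfl
    _ = #{i | P (eVec i + chi S)} / n := by
        rw [← sum_filter, sum_const, nsmul_eq_mul, mul_one_div]

lemma filter_hammingWt_eVec_add_chi_eq_card_sub_one (S : Finset (Fin n)) :
    ({i | hammingWt (eVec i + chi S) = #S - 1} : Finset (Fin n)) = S := by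
  ext i
  by_cases hi : i ∈ S
  · simp [hi, hammingWt_eVec_add_chi_of_mem]
  · simp [hi, hammingWt_eVec_add_chi_of_notMem]
    omega

lemma filter_hammingWt_eVec_add_chi_eq_card_add_one (S : Finset (Fin n)) :
    ({i | hammingWt (eVec i + chi S) = #S + 1} : Finset (Fin n)) = Sᶜ := by
  ext i
  by_cases hi : i ∈ S <;>
    simp [hi, hammingWt_eVec_add_chi_of_mem, hammingWt_eVec_add_chi_of_notMem]

theorem stmt2 (n : ℕ) (hn : 1 ≤ n) (S : Finset (Fin n)) (k : ℕ) (hk : S.card = k) :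
    (∀ x : Fin n → ZMod 2, pauliX S (wState n) x ≠ 0 →
        hammingWt x = k - 1 ∨ hammingWt x = k + 1) ∧
    (∑ x ∈ Finset.univ.filter (fun x : Fin n → ZMod 2 => hammingWt x = k - 1),
        ‖pauliX S (wState n) x‖ ^ 2 = (k : ℝ) / n) ∧
    (∑ x ∈ Finset.univ.filter (fun x : Fin n → ZMod 2 => hammingWt x = k + 1),
        ‖pauliX S (wState n) x‖ ^ 2 = ((n : ℝ) - k) / n) ∧
    (k = 0 → (∀ x : Fin n → ZMod 2, pauliX S (wState n) x ≠ 0 → hammingWt x = 1) ∧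
      ∑ x ∈ Finset.univ.filter (fun x : Fin n → ZMod 2 => hammingWt x = 1),
        ‖pauliX S (wState n) x‖ ^ 2 = 1) ∧
    (k = n → (∀ x : Fin n → ZMod 2, pauliX S (wState n) x ≠ 0 → hammingWt x = n - 1) ∧
      ∑ x ∈ Finset.univ.filter (fun x : Fin n → ZMod 2 => hammingWt x = n - 1),
        ‖pauliX S (wState n) x‖ ^ 2 = 1) := by
  subst hk
  have hn0 : (n : ℝ) ≠ 0 := by positivity
  have hlow := sum_filter_norm_sq_pauliX_wState S (hammingWt · = #S - 1)
  have hhigh := sum_filter_norm_sq_pauliX_wState S (hammingWt · = #S + 1)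
  rw [filter_hammingWt_eVec_add_chi_eq_card_sub_one] at hlow
  rw [filter_hammingWt_eVec_add_chi_eq_card_add_one, card_compl, Fintype.card_fin,
    Nat.cast_sub (card_le_univ S |>.trans_eq (Fintype.card_fin n))] at hhigh
  refine ⟨fun x hx => ?_, hlow, hhigh, fun hS => ⟨fun x hx => ?_, ?_⟩,
    fun hS => ⟨fun x hx => ?_, ?_⟩⟩
  · obtain ⟨i, rfl⟩ := exists_eq_eVec_add_chi_of_pauliX_wState_ne_zero hx
    by_cases hi : i ∈ S
    · exact .inl (hammingWt_eVec_add_chi_of_mem hi)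
    · exact .inr (hammingWt_eVec_add_chi_of_notMem hi)
  · obtain ⟨i, rfl⟩ := exists_eq_eVec_add_chi_of_pauliX_wState_ne_zero hx
    rw [hammingWt_eVec_add_chi_of_notMem (by simp [card_eq_zero.1 hS]), hS]
  · simpa [hS, hn0] using hhigh
  · obtain ⟨i, rfl⟩ := exists_eq_eVec_add_chi_of_pauliX_wState_ne_zero hx
    have hS_univ : S = univ := eq_univ_of_card S (hS.trans (Fintype.card_fin n).symm)
    rw [hammingWt_eVec_add_chi_of_mem (hS_univ ▸ mem_univ i), hS]
  · simpa [hS, hn0] using hlow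
end

section
/- (Correctness of the quantum notification protocol.) Let n ≥ 1, let E ⊆ Fin n have even cardinality (the source's random even set of X flips), and let T ⊆ Fin n (the set of agents who apply X because they notify the given agent). Let ψ be the state obtained from the n-qubit W state ψ_W by applying X_E and then X_T. Then: every bitstring x with ψ(x) ≠ 0 has even Hamming weight if |T| is odd, and every bitstring x with ψ(x) ≠ 0 has odd Hamming weight if |T| is even. Consequently the parity of the broadcast measurement outcomes equals 0 with certainty exactly when an odd number of agents notified the given agent. -/
/-! The W state is supported on bitstrings of weight one, and Hamming weight is additive mod 2, so
every `x` in the support of the flipped state satisfies `wt x + |E| + |T| ≡ 1 (mod 2)`. -/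

lemma hammingWt_cast_eq_sum {n : ℕ} (x : Fin n → ZMod 2) :
    (hammingWt x : ZMod 2) = ∑ i, x i := by
  rw [hammingWt, Finset.card_filter, Nat.cast_sum]
  refine Finset.sum_congr rfl fun i _ => ?_
  rcases (by decide : ∀ a : ZMod 2, a = 0 ∨ a = 1) (x i) with h | h <;> simp [h]

lemma even_hammingWt_add {n : ℕ} (x y : Fin n → ZMod 2) :
    Even (hammingWt (x + y)) ↔ (Even (hammingWt x) ↔ Even (hammingWt y)) := by
  rw [← Nat.even_add, ← ZMod.natCast_eq_zero_iff_even, ← ZMod.natCast_eq_zero_iff_even,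
    Nat.cast_add, hammingWt_cast_eq_sum, hammingWt_cast_eq_sum, hammingWt_cast_eq_sum, ← Finset.sum_add_distrib]
  rfl

lemma hammingWt_chi {n : ℕ} (S : Finset (Fin n)) : hammingWt (chi S) = S.card := by
  simp [hammingWt, chi]

lemma hammingWt_eq_one_of_wState_ne_zero {n : ℕ} {x : Fin n → ZMod 2} (h : wState n x ≠ 0) :
    hammingWt x = 1 := by
  by_contra hx
  simp [wState, hx] at h

lemma even_hammingWt_iff_odd_card_of_wState_ne_zero {n : ℕ} {E T : Finset (Fin n)}
    (hE : Even E.card) {x : Fin n → ZMod 2} (h : wState n (x + chi E + chi T) ≠ 0) :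
    Even (hammingWt x) ↔ Odd T.card := by
  have hodd : ¬Even (hammingWt (x + chi E + chi T)) := by
    rw [hammingWt_eq_one_of_wState_ne_zero h]
    decide
  rw [even_hammingWt_add, even_hammingWt_add, hammingWt_chi, hammingWt_chi] at hodd
  rw [← Nat.not_even_iff_odd]
  tauto

theorem stmt5_general (n : ℕ) (E T : Finset (Fin n)) (hE : Even E.card) :
    ((Odd T.card → ∀ x : Fin n → ZMod 2,
        wState n (x + chi E + chi T) ≠ 0 → Even (hammingWt x)) ∧
     (Even T.card → ∀ x : Fin n → ZMod 2,
        wState n (x + chi E + chi T) ≠ 0 → Odd (hammingWt x))) ∧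
    ∀ x : Fin n → ZMod 2, wState n (x + chi E + chi T) ≠ 0 →
      (Even (hammingWt x) ↔ Odd T.card) := by
  have key := fun x (hx : wState n (x + chi E + chi T) ≠ 0) =>
    even_hammingWt_iff_odd_card_of_wState_ne_zero hE hx
  refine ⟨⟨fun hT x hx => (key x hx).2 hT, fun hT x hx => ?_⟩, key⟩
  rw [← Nat.not_even_iff_odd, key x hx, Nat.not_odd_iff_even]
  exact hT

theorem stmt5 (n : ℕ) (hn : 1 ≤ n) (E T : Finset (Fin n)) (hE : Even E.card) :
    ((Odd T.card → ∀ x : Fin n → ZMod 2,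
        wState n (x + chi E + chi T) ≠ 0 → Even (hammingWt x)) ∧
     (Even T.card → ∀ x : Fin n → ZMod 2,
        wState n (x + chi E + chi T) ≠ 0 → Odd (hammingWt x))) ∧
    ∀ x : Fin n → ZMod 2, wState n (x + chi E + chi T) ≠ 0 →
      (Even (hammingWt x) ↔ Odd T.card) :=
  stmt5_general n E T hE
end
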